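/- arXiv:2410.06630 — 6 statements merged into one kernel-verified Lean document; each statement's English description precedes it below -/
import Mathlib

section
/- Let A be a flat ℤ/p²-algebra, I : A → A a ring automorphism with I(x) ≡ x mod p for all x, and φ : A → A a ring endomorphism with φ(x) ≡ x^p mod p for all x. Set φ' = I ∘ φ ∘ I⁻¹. Then for every x ∈ A there exists y ∈ A with φ(x) - φ'(x) = p·y^p. -/
/-!
Put `z = I⁻¹ x`, so that `x = I z = z + p a`. Since `p² = 0`, multiplication by `p` only sees residues mod `p`,
so `φ x = φ z + p φ(a) = φ z + p a^p`. On the other hand `I` fixes `φ z = z^p + p u`: it fixes `p u`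
for the same reason, and `I (z^p) = (z + p a)^p = z^p` because `a ≡ b mod p` implies
`a^p ≡ b^p mod p²`. Hence `φ x - I (φ z) = p a^p`.
-/

section

variable {A : Type*} [CommRing A]

lemma mul_eq_mul_of_sq_eq_zero_of_dvd_sub {c a b : A} (hc : c ^ 2 = 0) (h : c ∣ a - b) :
    c * a = c * b := by
  obtain ⟨e, he⟩ := h
  linear_combination c * he + e * hc

lemma pow_eq_pow_of_natCast_sq_eq_zero_of_dvd_sub {p : ℕ} {a b : A} (hp2 : (p : A) ^ 2 = 0)
    (h : (p : A) ∣ a - b) : a ^ p = b ^ p := by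
  have h2 : (p : A) ^ 2 ∣ a ^ p - b ^ p := by simpa using dvd_sub_pow_of_dvd_sub h 1
  rwa [hp2, zero_dvd_iff, sub_eq_zero] at h2

lemma map_frobeniusLift_eq_of_congr_id {p : ℕ} (hp2 : (p : A) ^ 2 = 0) {I φ : A →+* A}
    (hI : ∀ x, (p : A) ∣ I x - x) (hφ : ∀ x, (p : A) ∣ φ x - x ^ p) (z : A) :
    I (φ z) = φ z := by
  obtain ⟨u, hu⟩ := hφ z
  have hIzp : I z ^ p = z ^ p := pow_eq_pow_of_natCast_sq_eq_zero_of_dvd_sub hp2 (hI z)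
  have hIpu : (p : A) * I u = p * u := mul_eq_mul_of_sq_eq_zero_of_dvd_sub hp2 (hI u)
  calc I (φ z) = I z ^ p + p * I u := by
        rw [eq_add_of_sub_eq' hu, map_add, map_pow, map_mul, map_natCast]
    _ = φ z := by rw [hIzp, hIpu, ← hu, add_sub_cancel]

end

theorem stmt0_general (p : ℕ) (A : Type*) [CommRing A]
    (hp2 : (p : A) ^ 2 = 0)
    (I : A ≃+* A) (hI : ∀ x : A, ∃ y : A, I x - x = (p : A) * y)
    (φ : A →+* A) (hφ : ∀ x : A, ∃ y : A, φ x - x ^ p = (p : A) * y)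
    (x : A) :
    ∃ y : A, φ x - I (φ (I.symm x)) = (p : A) * y ^ p := by
  set z := I.symm x
  obtain ⟨a, ha⟩ := hI z
  rw [I.apply_symm_apply] at ha
  have hφpa : (p : A) * φ a = p * a ^ p := mul_eq_mul_of_sq_eq_zero_of_dvd_sub hp2 (hφ a)
  have hIφz : I (φ z) = φ z := map_frobeniusLift_eq_of_congr_id hp2 (I := I.toRingHom) hI hφ z
  refine ⟨a, ?_⟩
  rw [hIφz, eq_add_of_sub_eq' ha, map_add, map_mul, map_natCast, hφpa, add_sub_cancel_left]

/-- Let `A` be a flat `ℤ/p²`-algebra (so `p² = 0` in `A` and `p`-torsion is `p·A`),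
`I : A ≃+* A` a ring automorphism congruent to the identity mod `p`, and
`φ : A →+* A` a ring endomorphism with `φ(x) ≡ x^p mod p`.  Set `φ' = I ∘ φ ∘ I⁻¹`.
Then for every `x ∈ A` there exists `y ∈ A` with `φ(x) - φ'(x) = p·y^p`. -/
theorem stmt0 (p : ℕ) (hp : p.Prime) (A : Type*) [CommRing A]
    (hp2 : (p : A) ^ 2 = 0)
    (hflat : ∀ x : A, (p : A) * x = 0 → ∃ y : A, x = (p : A) * y)
    (I : A ≃+* A) (hI : ∀ x : A, ∃ y : A, I x - x = (p : A) * y)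
    (φ : A →+* A) (hφ : ∀ x : A, ∃ y : A, φ x - x ^ p = (p : A) * y)
    (x : A) :
    ∃ y : A, φ x - I (φ (I.symm x)) = (p : A) * y ^ p :=
  stmt0_general p A hp2 I hI φ hφ x
end

section
/- Let A be a flat ℤ/p²-algebra such that A/p is reduced, I an automorphism of A congruent to the identity mod p, and φ an endomorphism with φ(x) ≡ x^p mod p. Then I ∘ φ ∘ I⁻¹ = φ if and only if I is the identity. -/
/-!
Write `I x = x + p e`. Since `p² = 0`, raising to the `p`-th power kills the `p e` term, so `I`
fixes every `p`-th power and every multiple of `p`; hence `I` fixes `φ x = x^p + p y`. If `I`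
commutes with `φ`, then `φ (I x) = I (φ x) = φ x`, while `φ (I x) - φ x = p φ(e) = p e^p`.
Thus `p e^p = 0`, so `e^p ∈ pA` by flatness, `e ∈ pA` because `A/p` is reduced, and `p e = 0`.
-/

section SquareZero

variable {A : Type*} [CommRing A]

theorem mul_eq_zero_of_dvd_of_sq_eq_zero {a b : A} (ha : a ^ 2 = 0) (h : a ∣ b) : a * b = 0 := by
  obtain ⟨c, rfl⟩ := h
  linear_combination c * ha

theorem mul_eq_mul_of_dvd_sub_of_sq_eq_zero {a b c : A} (ha : a ^ 2 = 0) (h : a ∣ b - c) :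
    a * b = a * c :=
  sub_eq_zero.mp (by rw [← mul_sub]; exact mul_eq_zero_of_dvd_of_sq_eq_zero ha h)

theorem add_pow_of_sq_eq_zero (x y : A) (hy : y ^ 2 = 0) (n : ℕ) :
    (x + y) ^ n = x ^ n + n * x ^ (n - 1) * y := by
  simpa [Polynomial.derivative_X_pow] using
    Polynomial.eval_add_of_sq_eq_zero (Polynomial.X ^ n) x y hy

theorem pow_eq_pow_of_natCast_dvd_sub {p : ℕ} (hp2 : (p : A) ^ 2 = 0) {a b : A}
    (h : (p : A) ∣ a - b) : a ^ p = b ^ p := by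
  obtain ⟨c, hc⟩ := h
  have hpc : ((p : A) * c) ^ 2 = 0 := by rw [mul_pow, hp2, zero_mul]
  rw [sub_eq_iff_eq_add'.mp hc, add_pow_of_sq_eq_zero _ _ hpc]
  linear_combination b ^ (p - 1) * c * hp2

theorem map_eq_self_of_dvd_sub_pow {p : ℕ} (hp2 : (p : A) ^ 2 = 0) {F : Type*}
    [FunLike F A A] [RingHomClass F A A] {f : F} (hf : ∀ x, (p : A) ∣ f x - x)
    {a x : A} (ha : (p : A) ∣ a - x ^ p) : f a = a := by
  obtain ⟨c, hc⟩ := ha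
  have hfc : (p : A) * f c = p * c := mul_eq_mul_of_dvd_sub_of_sq_eq_zero hp2 (hf c)
  rw [sub_eq_iff_eq_add'.mp hc, map_add, map_mul, map_pow, map_natCast, hfc,
    pow_eq_pow_of_natCast_dvd_sub hp2 (hf x)]

end SquareZero

theorem stmt1_general (p : ℕ) (A : Type*) [CommRing A]
    (hp2 : (p : A) ^ 2 = 0)
    (hflat : ∀ x : A, (p : A) * x = 0 → ∃ y : A, x = (p : A) * y)
    (hred : IsReduced (A ⧸ Ideal.span {(p : A)}))
    (I : A ≃+* A) (hI : ∀ x : A, ∃ y : A, I x - x = (p : A) * y)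
    (φ : A →+* A) (hφ : ∀ x : A, ∃ y : A, φ x - x ^ p = (p : A) * y) :
    (∀ x : A, I (φ (I.symm x)) = φ x) ↔ (∀ x : A, I x = x) := by
  -- `∃ y, b = p * y` unfolds to `(p : A) ∣ b`, so the hypotheses feed the lemmas directly.
  constructor
  · intro H x
    have hrad : IsRadical (p : A) :=
      isRadical_iff_span_singleton.mpr ((Ideal.isRadical_iff_quotient_reduced _).mpr hred)
    obtain ⟨e, he⟩ := hI x
    have hφI : φ (I x) = φ x := by
      rw [← H (I x), I.symm_apply_apply, map_eq_self_of_dvd_sub_pow hp2 hI (hφ x)]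
    have hpe : (p : A) * e ^ p = 0 :=
      calc (p : A) * e ^ p = p * φ e := (mul_eq_mul_of_dvd_sub_of_sq_eq_zero hp2 (hφ e)).symm
        _ = φ (I x - x) := by rw [he, map_mul, map_natCast]
        _ = 0 := by rw [map_sub, hφI, sub_self]
    have hpe' : (p : A) * e = 0 := mul_eq_zero_of_dvd_of_sq_eq_zero hp2 (hrad p e (hflat _ hpe))
    exact sub_eq_zero.mp (he.trans hpe')
  · intro H x
    rw [← H (I.symm x), I.apply_symm_apply, H]

/-- Let `A` be a flat `ℤ/p²`-algebra such that `A/p` is reduced, `I` an automorphism of `A`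
congruent to the identity mod `p`, and `φ` an endomorphism with `φ(x) ≡ x^p mod p`.
Then `I ∘ φ ∘ I⁻¹ = φ` if and only if `I` is the identity. -/
theorem stmt1 (p : ℕ) (hp : p.Prime) (A : Type*) [CommRing A]
    (hp2 : (p : A) ^ 2 = 0)
    (hflat : ∀ x : A, (p : A) * x = 0 → ∃ y : A, x = (p : A) * y)
    (hred : IsReduced (A ⧸ Ideal.span {(p : A)}))
    (I : A ≃+* A) (hI : ∀ x : A, ∃ y : A, I x - x = (p : A) * y)
    (φ : A →+* A) (hφ : ∀ x : A, ∃ y : A, φ x - x ^ p = (p : A) * y) :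
    (∀ x : A, I (φ (I.symm x)) = φ x) ↔ (∀ x : A, I x = x) :=
  stmt1_general p A hp2 hflat hred I hI φ hφ
end

section
/- Let R be a commutative ring of characteristic p. The kernel of the ghost-component-zero projection W(R)/p → R (induced by W(R) → R, the first coordinate) is a square-zero ideal of W(R)/p. -/
/-!
A Witt vector with vanishing zeroth coordinate is a Verschiebung `V a`, and the projection
formula `V a * y = V (a * F y)` together with `F (V b) = p * b` gives `V a * V b = p * V (a * b)`.
-/

namespace WittVector

variable {p : ℕ} [Fact p.Prime] {R : Type*} [CommRing R]

theorem verschiebung_shift_one {x : WittVector p R} (hx : x.coeff 0 = 0) :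
    verschiebung (x.shift 1) = x := by
  simpa using (eq_iterate_verschiebung (n := 1) fun i hi => by rwa [Nat.lt_one_iff.mp hi]).symm

theorem verschiebung_mul_verschiebung (a b : WittVector p R) :
    verschiebung a * verschiebung b = (p : WittVector p R) * verschiebung (a * b) := by
  rw [← verschiebung_mul_frobenius, frobenius_verschiebung, ← mul_assoc, ← nsmul_eq_mul',
    map_nsmul, nsmul_eq_mul]

end WittVector

theorem stmt4_general (p : ℕ) [Fact p.Prime] (R : Type*) [CommRing R]
    (x y : WittVector p R) (hx : x.coeff 0 = 0) (hy : y.coeff 0 = 0) :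
    ∃ z : WittVector p R, x * y = (p : WittVector p R) * z := by
  refine ⟨WittVector.verschiebung (x.shift 1 * y.shift 1), ?_⟩
  rw [← WittVector.verschiebung_mul_verschiebung, WittVector.verschiebung_shift_one hx,
    WittVector.verschiebung_shift_one hy]

/-- Let `R` be a commutative ring of characteristic `p`.  The kernel of the projection
`W(R)/p → R` (induced by the zeroth-coordinate map `W(R) → R`) is a square-zero ideal of
`W(R)/p`: if `x, y ∈ W(R)` have vanishing zeroth coordinate, then `x·y ∈ p·W(R)`. -/
theorem stmt4 (p : ℕ) [Fact p.Prime] (R : Type*) [CommRing R] [CharP R p]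
    (x y : WittVector p R) (hx : x.coeff 0 = 0) (hy : y.coeff 0 = 0) :
    ∃ z : WittVector p R, x * y = (p : WittVector p R) * z :=
  stmt4_general p R x y hx hy
end

section
/- Let k be a perfect field of characteristic p and A a smooth k-algebra with a chosen lift (Ã, φ) where Ã is a flat W₂(k)-lift of A and φ lifts the Frobenius compatibly with the Witt Frobenius on W₂(k). Then the map δ : A → F_*A/A defined by δ(x̄) = class of (φ(x̃) - x̃^p)/p (for any lift x̃ of x̄) is well defined, and x ↦ (x, δ(x)) defines a ring homomorphism A → W₂(A)/p splitting the projection W₂(A)/p → A. -/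
/-!
Witt vectors `w` over `Ã` whose first ghost component is `φ` of their zeroth coordinate,
`w₀ ^ p + p * w₁ = φ w₀`, form a subring of `W(Ã)`, and `w ↦ w₀` maps it onto `Ã` because
`φ x ≡ x ^ p mod p`. When `w₀ = 0` this forces `p * w₁ = 0`; since the `p`-torsion of `W₂(k)` is
`p W₂(k)`, flatness makes the `p`-torsion of `Ã` lie in `p Ã`, so `π w₁ = 0`. Hence
`w ↦ (π w₀, π w₁)` descends to a ring map `Ã → W₂(A)`, `x ↦ (π x, π ((φ x - x ^ p) / p))`.
It sends `p` into `p W₂(A)`, so it descends once more to `A → W₂(A)/p`; it splits the projection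
because elements of `p W₂(A)` have zeroth coordinate `p * _ = 0`.
-/

universe u

open WittVector

lemma Module.Flat.exact_smul {R M : Type*} [CommRing R] [AddCommGroup M] [Module R M]
    [Module.Flat R M] {r s : R} (h : Function.Exact (r * · : R → R) (s * ·)) :
    Function.Exact (r • · : M → M) (s • ·) := by
  have hcomm (t : R) : LinearMap.lsmul R M t ∘ₗ (TensorProduct.rid R M).toLinearMap =
      (TensorProduct.rid R M).toLinearMap ∘ₗ (LinearMap.mulLeft R t).lTensor M :=
    TensorProduct.ext' fun m x => by simp [mul_smul, smul_comm t x m]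
  exact Function.Exact.of_ladder_linearEquiv_of_exact (hcomm r) (hcomm s)
    (Module.Flat.lTensor_exact M (f := LinearMap.mulLeft R r) (g := LinearMap.mulLeft R s) h)

namespace TruncatedWittVector

variable {p : ℕ} [hp : Fact p.Prime] {R : Type*} [CommRing R]

lemma natCast_p_mul_eq_mk [CharP R p] (u : TruncatedWittVector p 2 R) :
    (p : TruncatedWittVector p 2 R) * u = mk p ![0, u.coeff 0 ^ p] := by
  obtain ⟨w, rfl⟩ := WittVector.truncate_surjective p 2 R u
  rw [← map_natCast (WittVector.truncate 2), ← map_mul, mul_comm, ← verschiebung_frobenius]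
  ext i
  fin_cases i
  · simp [verschiebung_coeff_zero]
  · simp [WittVector.coeff_truncate, coeff_frobenius_charP]

lemma exact_natCast_p_mul [CharP R p] [PerfectRing R p] :
    Function.Exact (fun u : TruncatedWittVector p 2 R => (p : TruncatedWittVector p 2 R) * u)
      (fun u => (p : TruncatedWittVector p 2 R) * u) := by
  intro u
  simp only [natCast_p_mul_eq_mk, Set.mem_range]
  constructor
  · intro h
    have h0 : u.coeff 0 = 0 := by
      have hpow := congrArg (coeff 1) h
      simp only [coeff_mk] at hpow
      exact injective_frobenius R p (by simpa [frobenius_def, hp.out.ne_zero] using hpow)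
    refine ⟨mk p ![(frobeniusEquiv R p).symm (u.coeff 1), 0], ?_⟩
    ext i
    fin_cases i
    · simp [h0]
    · simp
  · rintro ⟨v, rfl⟩
    ext i
    fin_cases i <;> simp [hp.out.ne_zero]

lemma exact_nsmul_p_of_flat {M : Type*} [CharP R p] [PerfectRing R p] [AddCommGroup M]
    [Module (TruncatedWittVector p 2 R) M] [Module.Flat (TruncatedWittVector p 2 R) M] :
    Function.Exact (fun m : M => p • m) (fun m : M => p • m) := by
  simpa only [Nat.cast_smul_eq_nsmul] using
    Module.Flat.exact_smul (M := M) (r := (p : TruncatedWittVector p 2 R)) (s := p)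
      exact_natCast_p_mul

lemma coeff_zero_eq_of_sub_mem_span {n : ℕ} (hpR : (p : R) = 0)
    {u v : TruncatedWittVector p (n + 1) R}
    (h : u - v ∈ Ideal.span {(p : TruncatedWittVector p (n + 1) R)}) : u.coeff 0 = v.coeff 0 := by
  have coeff_zero_truncate (w : WittVector p R) :
      (WittVector.truncate (n + 1) w).coeff 0 = constantCoeff w := by
    simp [WittVector.coeff_truncate, constantCoeff_apply]
  obtain ⟨c, hc⟩ := Ideal.mem_span_singleton'.mp h
  obtain ⟨U, rfl⟩ := WittVector.truncate_surjective p (n + 1) R u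
  obtain ⟨V, rfl⟩ := WittVector.truncate_surjective p (n + 1) R v
  obtain ⟨C, rfl⟩ := WittVector.truncate_surjective p (n + 1) R c
  rw [← map_natCast (WittVector.truncate (n + 1)), ← map_mul, ← map_sub] at hc
  have hc0 := congrArg (coeff 0) hc
  rw [coeff_zero_truncate, coeff_zero_truncate, map_mul, map_natCast, hpR, mul_zero, map_sub,
    eq_comm, sub_eq_zero] at hc0
  rwa [coeff_zero_truncate, coeff_zero_truncate]

end TruncatedWittVector

namespace WittVector

variable {p : ℕ} [hp : Fact p.Prime] {A B : Type*} [CommRing A] [CommRing B]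

lemma ghostComponent_one_eq (x : WittVector p A) :
    ghostComponent 1 x = x.coeff 0 ^ p + p * x.coeff 1 := by
  simp [ghostComponent_apply, add_comm]

variable (p) in
noncomputable def frobeniusLiftLocus (φ : A →+* A) : Subring (WittVector p A) :=
  (ghostComponent 1).eqLocus (φ.comp constantCoeff)

lemma mem_frobeniusLiftLocus {φ : A →+* A} {w : WittVector p A} :
    w ∈ frobeniusLiftLocus p φ ↔ w.coeff 0 ^ p + p * w.coeff 1 = φ (w.coeff 0) := by
  rw [frobeniusLiftLocus, RingHom.mem_eqLocus, ghostComponent_one_eq]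
  rfl

lemma mk_mem_frobeniusLiftLocus {φ : A →+* A} {x y : A} (h : φ x - x ^ p = p * y) :
    WittVector.mk p (fun n => if n = 0 then x else y) ∈ frobeniusLiftLocus p φ := by
  rw [mem_frobeniusLiftLocus]
  simp only [coeff_mk, if_pos, one_ne_zero, if_false]
  rw [← h]
  ring

lemma natCast_p_mul_coeff_one_eq_zero {φ : A →+* A} {w : WittVector p A}
    (hw : w ∈ frobeniusLiftLocus p φ) (h0 : w.coeff 0 = 0) : (p : A) * w.coeff 1 = 0 := by
  rw [mem_frobeniusLiftLocus, h0] at hw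
  simpa [hp.out.ne_zero] using hw

variable (φ : A →+* A) (π : A →+* B)

lemma surjective_constantCoeff_frobeniusLiftLocus (hφ : ∀ x, ∃ y, φ x - x ^ p = p * y) :
    Function.Surjective (constantCoeff.comp (frobeniusLiftLocus p φ).subtype) := fun x =>
  let ⟨_, hy⟩ := hφ x
  ⟨⟨_, mk_mem_frobeniusLiftLocus hy⟩, by simp [constantCoeff_apply]⟩

lemma ker_constantCoeff_le_ker_truncate_map (htors : ∀ z, (p : A) * z = 0 → π z = 0) :
    RingHom.ker (constantCoeff.comp (frobeniusLiftLocus p φ).subtype) ≤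
      RingHom.ker ((truncate 2).comp ((map π).comp (frobeniusLiftLocus p φ).subtype)) := by
  rintro ⟨w, hw⟩ h0
  replace h0 : w.coeff 0 = 0 := h0
  rw [RingHom.mem_ker]
  ext i
  fin_cases i
  · simp [coeff_truncate, h0]
  · simp [coeff_truncate, htors _ (natCast_p_mul_coeff_one_eq_zero hw h0)]

variable (hφ : ∀ x, ∃ y, φ x - x ^ p = p * y) (htors : ∀ z, (p : A) * z = 0 → π z = 0)

noncomputable def wittTwoOfFrobeniusLift : A →+* TruncatedWittVector p 2 B :=
  RingHom.liftOfSurjective _ (surjective_constantCoeff_frobeniusLiftLocus φ hφ)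
    ⟨_, ker_constantCoeff_le_ker_truncate_map φ π htors⟩

lemma wittTwoOfFrobeniusLift_apply {x y : A} (h : φ x - x ^ p = p * y) :
    wittTwoOfFrobeniusLift φ π hφ htors x = TruncatedWittVector.mk p ![π x, π y] := by
  have hcomp := RingHom.liftOfSurjective_comp_apply _
    (surjective_constantCoeff_frobeniusLiftLocus φ hφ)
    ⟨_, ker_constantCoeff_le_ker_truncate_map φ π htors⟩ ⟨_, mk_mem_frobeniusLiftLocus h⟩
  simp only [RingHom.comp_apply, Subring.subtype_apply, constantCoeff_apply, coeff_mk,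
    if_pos] at hcomp
  rw [wittTwoOfFrobeniusLift, hcomp]
  ext i
  fin_cases i <;> simp [coeff_truncate]

end WittVector

theorem stmt12_general (p : ℕ) [Fact p.Prime] (k : Type u) [Field k] [CharP k p] [PerfectRing k p]
    (A : Type u) [CommRing A]
    (Alift : Type*) [CommRing Alift] [Algebra (TruncatedWittVector p 2 k) Alift]
    [Module.Flat (TruncatedWittVector p 2 k) Alift]
    (π : Alift →+* A) (hsurj : Function.Surjective π)
    (hker : RingHom.ker π = Ideal.span {(p : Alift)})
    (φ : Alift →+* Alift) (hlift : ∀ x : Alift, π (φ x) = (π x) ^ p) :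
    ∃ s : A →+* (TruncatedWittVector p 2 A ⧸
        Ideal.span {(p : TruncatedWittVector p 2 A)}),
      (∀ (a : A) (w : TruncatedWittVector p 2 A),
        s a = Ideal.Quotient.mk (Ideal.span {(p : TruncatedWittVector p 2 A)}) w →
          w.coeff 0 = a) ∧
      (∀ x y : Alift, φ x - x ^ p = (p : Alift) * y →
        s (π x) = Ideal.Quotient.mk (Ideal.span {(p : TruncatedWittVector p 2 A)})
          (TruncatedWittVector.mk p ![π x, π y])) := by
  have hpA : (p : A) = 0 := by
    rw [← map_natCast π, ← RingHom.mem_ker, hker]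
    exact Ideal.mem_span_singleton_self _
  have hφ (x : Alift) : ∃ y, φ x - x ^ p = p * y := by
    have hx : φ x - x ^ p ∈ RingHom.ker π := by
      rw [RingHom.mem_ker, map_sub, map_pow, hlift, sub_self]
    rwa [hker, Ideal.mem_span_singleton] at hx
  have htors (z : Alift) (hz : (p : Alift) * z = 0) : π z = 0 := by
    obtain ⟨t, rfl⟩ := (TruncatedWittVector.exact_nsmul_p_of_flat (R := k) z).mp
      (by simpa only [nsmul_eq_mul] using hz)
    change π (p • t) = 0
    rw [nsmul_eq_mul, map_mul, map_natCast, hpA, zero_mul]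
  let I := Ideal.span {(p : TruncatedWittVector p 2 A)}
  have hker_le : RingHom.ker π ≤
      RingHom.ker ((Ideal.Quotient.mk I).comp (wittTwoOfFrobeniusLift φ π hφ htors)) := by
    rw [hker, Ideal.span_le, Set.singleton_subset_iff, SetLike.mem_coe, RingHom.mem_ker,
      map_natCast, ← map_natCast (Ideal.Quotient.mk I), Ideal.Quotient.eq_zero_iff_mem]
    exact Ideal.mem_span_singleton_self _
  refine ⟨π.liftOfSurjective hsurj ⟨_, hker_le⟩, fun a w h => ?_, fun x y hxy => ?_⟩
  · obtain ⟨x, rfl⟩ := hsurj a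
    obtain ⟨y, hy⟩ := hφ x
    rw [RingHom.liftOfSurjective_comp_apply, RingHom.comp_apply, Ideal.Quotient.eq] at h
    rw [← TruncatedWittVector.coeff_zero_eq_of_sub_mem_span hpA h,
      wittTwoOfFrobeniusLift_apply φ π hφ htors hy]
    rfl
  · rw [RingHom.liftOfSurjective_comp_apply, RingHom.comp_apply,
      wittTwoOfFrobeniusLift_apply φ π hφ htors hxy]

/-- Let `k` be a perfect field of characteristic `p` and `A` a smooth `k`-algebra with a
chosen lift `(Alift, φ)`, where `Alift` is a flat `W₂(k)`-lift of `A` (given by a surjection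
`π : Alift → A` with kernel `(p)`) and `φ` lifts the Frobenius compatibly with the Witt
Frobenius of `W₂(k)` (which, in characteristic `p`, raises each Witt coordinate to the
`p`-th power).  Then the map `δ : A → F_*A/A`, `δ(x̄) = class of (φ(x̃) - x̃^p)/p`, is well
defined and `x ↦ (x, δ(x))` defines a ring homomorphism `A → W₂(A)/p` splitting the
projection `W₂(A)/p → A`. -/
theorem stmt12 (p : ℕ) [Fact p.Prime] (k : Type u) [Field k] [CharP k p] [PerfectRing k p]
    (A : Type u) [CommRing A] [Algebra k A] (hsmooth : Algebra.Smooth k A)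
    (Alift : Type*) [CommRing Alift] [Algebra (TruncatedWittVector p 2 k) Alift]
    [Module.Flat (TruncatedWittVector p 2 k) Alift]
    (π : Alift →+* A) (hsurj : Function.Surjective π)
    (hker : RingHom.ker π = Ideal.span {(p : Alift)})
    (φ : Alift →+* Alift) (hlift : ∀ x : Alift, π (φ x) = (π x) ^ p)
    (hcompat : ∀ c : TruncatedWittVector p 2 k,
      φ (algebraMap (TruncatedWittVector p 2 k) Alift c) =
        algebraMap (TruncatedWittVector p 2 k) Alift
          (TruncatedWittVector.mk p ![c.coeff 0 ^ p, c.coeff 1 ^ p])) :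
    ∃ s : A →+* (TruncatedWittVector p 2 A ⧸
        Ideal.span {(p : TruncatedWittVector p 2 A)}),
      (∀ (a : A) (w : TruncatedWittVector p 2 A),
        s a = Ideal.Quotient.mk (Ideal.span {(p : TruncatedWittVector p 2 A)}) w →
          w.coeff 0 = a) ∧
      (∀ x y : Alift, φ x - x ^ p = (p : Alift) * y →
        s (π x) = Ideal.Quotient.mk (Ideal.span {(p : TruncatedWittVector p 2 A)})
          (TruncatedWittVector.mk p ![π x, π y])) :=
  stmt12_general p k A Alift π hsurj hker φ hlift
end

section
/- Let A be an 𝔽_p-algebra and A^perf its colimit perfection. Then for any element x ∈ W(A), the element 1 ⊗ F⁻¹(x) − F⁻¹(x) ⊗ 1 formed in W(A^perf ⊗_A A^perf) lies in ker(F), and the assignment x mod F(W(A)) ↦ 1⊗F⁻¹(x) − F⁻¹(x)⊗1 is a well-defined additive map from W(A)/F(W(A)) to ker(F : W(A^perf⊗_A A^perf) → W(A^perf⊗_A A^perf)). -/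
open TensorProduct

/-- The "separating" element attached to `x ∈ W(A)`: the element
`1 ⊗ F⁻¹(x) − F⁻¹(x) ⊗ 1` of `W(B ⊗[A] B)`, where `B` is a perfect `A`-algebra (playing
the role of the perfection `A^perf`) and `F⁻¹` is the inverse of the bijective Witt
Frobenius of `W(B)`. -/
noncomputable def wittSep (p : ℕ) [Fact p.Prime]
    (A : Type*) [CommRing A] [CharP A p]
    (B : Type*) [CommRing B] [CharP B p] [Algebra A B] [PerfectRing B p]
    (x : WittVector p A) : WittVector p (B ⊗[A] B) :=
  WittVector.map (Algebra.TensorProduct.includeRight (R := A) (A := B)).toRingHom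
      ((WittVector.frobeniusEquiv p B).symm (WittVector.map (algebraMap A B) x)) -
    WittVector.map (Algebra.TensorProduct.includeLeftRingHom (R := A) (A := B))
      ((WittVector.frobeniusEquiv p B).symm (WittVector.map (algebraMap A B) x))

lemma wittMap_map {p : ℕ} [Fact p.Prime] {R S T : Type*} [CommRing R] [CommRing S]
    [CommRing T] (g : S →+* T) (f : R →+* S) (x : WittVector p R) :
    WittVector.map g (WittVector.map f x) = WittVector.map (g.comp f) x := by
  ext n
  simp [WittVector.map_coeff]

/-- Frobenius commutes with `map` in characteristic `p`. -/
lemma wittMap_frobenius {p : ℕ} [Fact p.Prime] {R S : Type*} [CommRing R] [CommRing S]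
    [CharP R p] [CharP S p] (g : R →+* S) (x : WittVector p R) :
    WittVector.map g (WittVector.frobenius x) = WittVector.frobenius (WittVector.map g x) := by
  rw [WittVector.frobenius_eq_map_frobenius, WittVector.frobenius_eq_map_frobenius,
    wittMap_map, wittMap_map]
  congr 1
  ext a
  simp [frobenius_def, map_pow]

lemma wittFrobenius_map_symm {p : ℕ} [Fact p.Prime] {R S : Type*} [CommRing R] [CommRing S]
    [CharP R p] [CharP S p] [PerfectRing R p] (g : R →+* S) (y : WittVector p R) :
    WittVector.frobenius (WittVector.map g ((WittVector.frobeniusEquiv p R).symm y)) =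
      WittVector.map g y := by
  rw [← wittMap_frobenius]
  congr 1
  rw [← WittVector.frobeniusEquiv_apply p R, RingEquiv.apply_symm_apply]

lemma incR_eq_incL (A : Type*) [CommRing A]
    (B : Type*) [CommRing B] [Algebra A B] :
    (Algebra.TensorProduct.includeRight (R := A) (A := B)).toRingHom.comp (algebraMap A B) =
      (Algebra.TensorProduct.includeLeftRingHom (R := A) (A := B)).comp (algebraMap A B) := by
  ext a
  simp only [RingHom.coe_comp, Function.comp_apply, AlgHom.toRingHom_eq_coe, RingHom.coe_coe,
    Algebra.TensorProduct.includeRight_apply, Algebra.TensorProduct.includeLeftRingHom_apply]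
  rw [Algebra.algebraMap_eq_smul_one]
  exact (smul_tmul (R := A) (M := B) (N := B) a 1 1).symm

/-- Let `A` be an `𝔽_p`-algebra and `B` a perfect `A`-algebra (e.g. the colimit
perfection `A^perf`).  For any `x ∈ W(A)`, the element `1 ⊗ F⁻¹(x) − F⁻¹(x) ⊗ 1` formed
in `W(B ⊗[A] B)` lies in `ker F`, and the assignment
`x mod F(W(A)) ↦ 1⊗F⁻¹(x) − F⁻¹(x)⊗1` is a well-defined additive map from
`W(A)/F(W(A))` to `ker(F : W(B ⊗[A] B) → W(B ⊗[A] B))`: it is additive and kills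
`F(W(A))`. -/
theorem stmt17 (p : ℕ) [Fact p.Prime]
    (A : Type*) [CommRing A] [CharP A p]
    (B : Type*) [CommRing B] [CharP B p] [Algebra A B] [PerfectRing B p]
    [CharP (B ⊗[A] B) p] :
    (∀ x : WittVector p A, WittVector.frobenius (wittSep p A B x) = 0) ∧
    (∀ x y : WittVector p A, wittSep p A B (x + y) = wittSep p A B x + wittSep p A B y) ∧
    (∀ w : WittVector p A, wittSep p A B (WittVector.frobenius w) = 0) := by
  refine ⟨fun x => ?_, fun x y => ?_, fun w => ?_⟩
  · unfold wittSep
    rw [map_sub, wittFrobenius_map_symm, wittFrobenius_map_symm, wittMap_map, wittMap_map,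
      incR_eq_incL, sub_self]
  · unfold wittSep
    simp only [map_add]
    abel
  · unfold wittSep
    rw [wittMap_frobenius (algebraMap A B) w]
    rw [← WittVector.frobeniusEquiv_apply p B]
    rw [RingEquiv.symm_apply_apply]
    rw [wittMap_map, wittMap_map, incR_eq_incL, sub_self]
end

section
/- Let k be a perfect field of characteristic p, A a commutative k-algebra, and à a flat W₂(k)-lift of A. The set of Frobenius lifts on à (endomorphisms φ of à lifting the p-th power map of A, compatible with the Frobenius of W₂(k)) is, when nonempty, a torsor under the group Der_k(A, F_*A) of k-derivations from A to F_*A: if φ is one Frobenius lift and ∂ ∈ Der_k(A, F_*A), then φ + p∂ (meaning x ↦ φ(x) + p·∂̃(x) for a set-theoretic lift) is again a Frobenius lift, and every Frobenius lift on à arises this way for a unique ∂. -/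
/-- `φ'` is a Frobenius lift on `Alift` (a `W₂(k)`-algebra with a surjection `π` onto `A`):
it reduces to the `p`-th power map of `A` and is compatible with the Frobenius of `W₂(k)`
(which, `k` being perfect of characteristic `p`, raises each Witt coordinate to the `p`-th
power). -/
def IsFrobeniusLift (p : ℕ) [Fact p.Prime] (k : Type*) [Field k] [CharP k p]
    (A : Type*) [CommRing A]
    (Alift : Type*) [CommRing Alift] [Algebra (TruncatedWittVector p 2 k) Alift]
    (π : Alift →+* A) (φ' : Alift →+* Alift) : Prop :=
  (∀ x : Alift, π (φ' x) = (π x) ^ p) ∧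
    ∀ c : TruncatedWittVector p 2 k,
      φ' (algebraMap (TruncatedWittVector p 2 k) Alift c) =
        algebraMap (TruncatedWittVector p 2 k) Alift
          (TruncatedWittVector.mk p ![c.coeff 0 ^ p, c.coeff 1 ^ p])

/-- `D : A → A` is a `k`-linear Frobenius-twisted derivation, i.e. an element of
`Der_k(A, F_*A)`: additive, `D(xy) = x^p D(y) + y^p D(x)`, and vanishing on (the image
of) `k`. -/
def IsTwistedDerivation (p : ℕ) (k : Type*) [Field k] (A : Type*) [CommRing A]
    [Algebra k A] (D : A → A) : Prop :=
  (∀ x y : A, D (x + y) = D x + D y) ∧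
    (∀ x y : A, D (x * y) = x ^ p * D y + y ^ p * D x) ∧
    ∀ c : k, D (algebraMap k A c) = 0

/-!
As `p² = 0` in `W₂(k)` and `Ã` is flat over `W₂(k)`, multiplication by `p` induces an isomorphism
of `Ã`-modules `A ≅ pÃ`, `a ↦ p·ã`, and `(pÃ)² = 0`. Two Frobenius lifts agree modulo `p` and
(since `p·(pÃ) = 0`) on `pÃ`, so they differ by `x ↦ p·D(x̄)` for a unique `D : A → A`.
Because `(pÃ)² = 0` and `φ(x) ≡ x̄^p`, the ring-homomorphism axioms for `φ + p·D` are exactly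
additivity and the twisted Leibniz rule for `D`; compatibility with `W₂(k)` is `k`-linearity of
`D`, since every element of `W₂(k)` is a Teichmüller representative plus a multiple of `p`.
-/

theorem Module.Flat.exists_eq_smul_of_smul_eq_zero {R M : Type*} [CommRing R] [AddCommGroup M]
    [Module R M] [Module.Flat R M] {r : R} (hr : ∀ a : R, r * a = 0 → ∃ b, a = r * b)
    {y : M} (hy : r • y = 0) : ∃ e, y = r • e := by
  obtain ⟨_, a, z, hyz, ha⟩ := Module.Flat.isTrivialRelation_of_sum_smul_eq_zero
    (f := fun _ : Unit => r) (x := fun _ => y) (by simpa using hy)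
  choose b hb using fun j => hr (a () j) (by simpa using ha j)
  refine ⟨∑ j, b j • z j, ?_⟩
  simp only [hyz (), hb, Finset.smul_sum, mul_smul]

namespace TruncatedWittVector

variable {p : ℕ} [Fact p.Prime] {k : Type*} [CommRing k]

theorem natCast_mul_truncate (w : WittVector p k) :
    (p : TruncatedWittVector p 2 k) * WittVector.truncate 2 w =
      WittVector.truncate 2 (w * (p : WittVector p k)) := by
  rw [map_mul, map_natCast, mul_comm]

variable [CharP k p]

theorem natCast_mul_self_eq_zero : (p : TruncatedWittVector p 2 k) * p = 0 := by
  rw [← map_natCast (WittVector.truncate 2), ← map_mul, ← sq, ← RingHom.mem_ker,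
    WittVector.mem_ker_truncate]
  intro i hi
  exact WittVector.coeff_p_pow_eq_zero p k (by omega)

variable [PerfectRing k p]

theorem exists_eq_natCast_mul_of_natCast_mul_eq_zero {x : TruncatedWittVector p 2 k}
    (hx : (p : TruncatedWittVector p 2 k) * x = 0) : ∃ y, x = p * y := by
  obtain ⟨w, rfl⟩ := WittVector.truncate_surjective p 2 k x
  have hw : w.coeff 0 ^ p = 0 := by
    rw [← WittVector.mul_charP_coeff_succ]
    exact (WittVector.coeff_truncate _ (1 : Fin 2)).symm.trans
      (by rw [← natCast_mul_truncate, hx, coeff_zero])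
  have hw0 : w.coeff 0 = 0 := injective_frobenius k p (by rw [frobenius_def, hw, map_zero])
  obtain ⟨v, rfl⟩ :=
    Ideal.mem_span_singleton.mp ((WittVector.mem_span_p_iff_coeff_zero_eq_zero w).mpr hw0)
  exact ⟨WittVector.truncate 2 v, by rw [map_mul, map_natCast]⟩

theorem exists_eq_mk_add_natCast_mul (c : TruncatedWittVector p 2 k) :
    ∃ y, c = mk p ![c.coeff 0, 0] + p * y := by
  obtain ⟨w, rfl⟩ := WittVector.truncate_surjective p 2 k c
  have hteich : mk p ![(WittVector.truncate 2 w).coeff 0, 0] =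
      WittVector.truncate 2 (WittVector.teichmuller p (w.coeff 0)) := by
    ext i
    fin_cases i
    · simp [coeff_mk, WittVector.teichmuller_coeff_zero]
    · simp [coeff_mk, WittVector.teichmuller_coeff_pos]
  have hw : w - WittVector.teichmuller p (w.coeff 0) ∈ Ideal.span {(p : WittVector p k)} := by
    rw [← WittVector.ker_constantCoeff, RingHom.mem_ker, map_sub]
    exact sub_eq_zero.mpr (WittVector.teichmuller_coeff_zero p _).symm
  obtain ⟨v, hv⟩ := Ideal.mem_span_singleton.mp hw
  refine ⟨WittVector.truncate 2 v, ?_⟩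
  rw [hteich, ← map_natCast (WittVector.truncate 2), ← map_mul, ← map_add, ← hv,
    add_sub_cancel]

end TruncatedWittVector

/-- `A = B/p` with `p² = 0` in `B` and `ann(p) = pB`, i.e. multiplication by `p` identifies `A`
with `pB`; for `B` over `ℤ/p²` (or `W₂(k)`) the last condition is flatness. -/
structure IsFlatSquareZeroLift {B A : Type*} [CommRing B] [CommRing A] (π : B →+* A) (p : ℕ) :
    Prop where
  surjective : Function.Surjective π
  ker_eq : RingHom.ker π = Ideal.span {(p : B)}
  natCast_mul_self : (p : B) * p = 0
  map_eq_zero_of_natCast_mul_eq_zero : ∀ d : B, (p : B) * d = 0 → π d = 0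

namespace IsFlatSquareZeroLift

variable {B A : Type*} [CommRing B] [CommRing A] {π : B →+* A} {p : ℕ}
  (h : IsFlatSquareZeroLift π p)
include h

theorem map_natCast_eq_zero : π (p : B) = 0 := by
  rw [← RingHom.mem_ker, h.ker_eq]
  exact Ideal.mem_span_singleton_self _

theorem exists_eq_add_natCast_mul {x y : B} (hxy : π x = π y) : ∃ c, x = y + p * c := by
  obtain ⟨c, hc⟩ := Ideal.mem_span_singleton'.mp
    (h.ker_eq ▸ RingHom.mem_ker.mpr (by rw [map_sub, hxy, sub_self]) : x - y ∈ _)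
  exact ⟨c, by rw [mul_comm, hc, add_sub_cancel]⟩

theorem natCast_mul_eq_natCast_mul_iff {d d' : B} : (p : B) * d = p * d' ↔ π d = π d' := by
  constructor
  · intro hdd
    rw [← sub_eq_zero, ← map_sub]
    exact h.map_eq_zero_of_natCast_mul_eq_zero _ (by rw [mul_sub, hdd, sub_self])
  · intro hdd
    obtain ⟨c, rfl⟩ := h.exists_eq_add_natCast_mul hdd
    rw [mul_add, ← mul_assoc, h.natCast_mul_self, zero_mul, add_zero]

/-- `a ↦ p·ã`, independent of the lift `ã` of `a`: a `B`-linear isomorphism `A ≃ pB`. -/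
noncomputable def mulLift (a : A) : B :=
  p * Function.surjInv h.surjective a

theorem map_surjInv (a : A) : π (Function.surjInv h.surjective a) = a :=
  Function.surjInv_eq h.surjective a

theorem mulLift_eq {a : A} {d : B} (hd : π d = a) : h.mulLift a = p * d :=
  h.natCast_mul_eq_natCast_mul_iff.mpr (by rw [h.map_surjInv, hd])

theorem mulLift_injective : Function.Injective h.mulLift := fun a b hab => by
  simpa only [h.map_surjInv] using h.natCast_mul_eq_natCast_mul_iff.mp hab

theorem map_mulLift (a : A) : π (h.mulLift a) = 0 := by
  rw [mulLift, map_mul, h.map_natCast_eq_zero, zero_mul]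

theorem mulLift_zero : h.mulLift 0 = 0 := by
  rw [h.mulLift_eq (map_zero π), mul_zero]

theorem mulLift_add (a b : A) : h.mulLift (a + b) = h.mulLift a + h.mulLift b := by
  rw [h.mulLift_eq (h.map_surjInv a), h.mulLift_eq (h.map_surjInv b), ← mul_add]
  exact h.mulLift_eq (by rw [map_add, h.map_surjInv, h.map_surjInv])

theorem mul_mulLift (x : B) (a : A) : x * h.mulLift a = h.mulLift (π x * a) := by
  rw [h.mulLift_eq (h.map_surjInv a), h.mulLift_eq (d := x * Function.surjInv h.surjective a)
    (by rw [map_mul, h.map_surjInv])]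
  ring

theorem mulLift_mul_mulLift (a b : A) : h.mulLift a * h.mulLift b = 0 := by
  rw [mulLift, mulLift, mul_mul_mul_comm, h.natCast_mul_self, zero_mul]

theorem exists_eq_add_mulLift {x y : B} (hxy : π x = π y) : ∃ a, x = y + h.mulLift a := by
  obtain ⟨c, rfl⟩ := h.exists_eq_add_natCast_mul hxy
  exact ⟨π c, by rw [h.mulLift_eq rfl]⟩

theorem forall_eq_add_natCast_mul_iff {φ ψ : B →+* B} {D : A → A} :
    (∀ x d : B, π d = D (π x) → ψ x = φ x + p * d) ↔
      ∀ x, ψ x = φ x + h.mulLift (D (π x)) :=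
  ⟨fun hψ x => hψ x _ (h.map_surjInv _),
    fun hψ x d hd => by rw [hψ, h.mulLift_eq hd]⟩

section Perturbation

variable {f : A → A} {φ : B →+* B} (hφ : ∀ x, π (φ x) = f (π x))
include hφ

/-- `φ + p·D` for an `f`-twisted derivation `D`. -/
noncomputable def perturb (D : A → A) (hadd : ∀ a b, D (a + b) = D a + D b)
    (hmul : ∀ a b, D (a * b) = f a * D b + f b * D a) : B →+* B where
  toFun x := φ x + h.mulLift (D (π x))
  map_zero' := by
    have hD0 : D 0 = 0 := by simpa using hadd 0 0
    rw [map_zero, map_zero, hD0, h.mulLift_zero, add_zero]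
  map_one' := by
    have hf1 : f 1 = 1 := by rw [← map_one π, ← hφ, map_one, map_one]
    have hD1 : D 1 = 0 := by simpa [hf1] using hmul 1 1
    rw [map_one, map_one, hD1, h.mulLift_zero, add_zero]
  map_add' x y := by
    simp only [map_add, hadd, h.mulLift_add]
    ring
  map_mul' x y := by
    simp only [map_mul, hmul, h.mulLift_add, ← hφ, ← h.mul_mulLift]
    linear_combination -h.mulLift_mul_mulLift (D (π x)) (D (π y))

theorem perturb_apply (D : A → A) (hadd : ∀ a b, D (a + b) = D a + D b)
    (hmul : ∀ a b, D (a * b) = f a * D b + f b * D a) (x : B) :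
    h.perturb hφ D hadd hmul x = φ x + h.mulLift (D (π x)) :=
  rfl

end Perturbation

theorem exists_forall_eq_add_mulLift {φ φ' : B →+* B} (hφφ' : ∀ x, π (φ' x) = π (φ x)) :
    ∃ D : A → A, ∀ x, φ' x = φ x + h.mulLift (D (π x)) := by
  choose D hD using fun a => h.exists_eq_add_mulLift (hφφ' (Function.surjInv h.surjective a))
  refine ⟨D, fun x => ?_⟩
  obtain ⟨b, hb⟩ := h.exists_eq_add_mulLift (h.map_surjInv (π x)).symm
  -- `φ` and `φ'` agree on `pB`, since `p·ker π = 0`.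
  have hpb : φ' (h.mulLift b) = φ (h.mulLift b) := by
    rw [h.mulLift_eq (h.map_surjInv b), map_mul, map_mul, map_natCast, map_natCast,
      h.natCast_mul_eq_natCast_mul_iff]
    exact hφφ' _
  have hφ'x : φ' x = φ' (Function.surjInv h.surjective (π x)) + φ' (h.mulLift b) := by
    rw [← map_add, ← hb]
  have hφx : φ x = φ (Function.surjInv h.surjective (π x)) + φ (h.mulLift b) := by
    rw [← map_add, ← hb]
  rw [hφ'x, hφx, hD, hpb]
  ring

theorem eq_of_forall_eq_add_mulLift {φ φ' : B →+* B} {D D' : A → A}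
    (hD : ∀ x, φ' x = φ x + h.mulLift (D (π x)))
    (hD' : ∀ x, φ' x = φ x + h.mulLift (D' (π x))) :
    D = D' := funext fun a => by
  obtain ⟨x, rfl⟩ := h.surjective a
  exact h.mulLift_injective (add_left_cancel ((hD x).symm.trans (hD' x)))

section Difference

variable {φ φ' : B →+* B} {D : A → A} (hD : ∀ x, φ' x = φ x + h.mulLift (D (π x)))
include hD

theorem map_add_of_forall_eq_add_mulLift (a b : A) : D (a + b) = D a + D b := by
  obtain ⟨x, rfl⟩ := h.surjective a
  obtain ⟨y, rfl⟩ := h.surjective b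
  apply h.mulLift_injective
  have hxy := hD (x + y)
  rw [map_add, map_add, map_add, hD x, hD y] at hxy
  rw [h.mulLift_add]
  linear_combination -hxy

theorem map_mul_of_forall_eq_add_mulLift {f : A → A} (hφ : ∀ x, π (φ x) = f (π x))
    (a b : A) :
    D (a * b) = f a * D b + f b * D a := by
  obtain ⟨x, rfl⟩ := h.surjective a
  obtain ⟨y, rfl⟩ := h.surjective b
  apply h.mulLift_injective
  have hxy := hD (x * y)
  rw [map_mul, map_mul, map_mul, hD x, hD y] at hxy
  rw [h.mulLift_add, ← hφ, ← hφ, ← h.mul_mulLift, ← h.mul_mulLift]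
  linear_combination -hxy + h.mulLift_mul_mulLift (D (π x)) (D (π y))

end Difference

end IsFlatSquareZeroLift

open TruncatedWittVector in
theorem isFlatSquareZeroLift_of_flat {p : ℕ} [Fact p.Prime] {k : Type*} [CommRing k] [CharP k p]
    [PerfectRing k p] {A : Type*} [CommRing A] {Alift : Type*} [CommRing Alift]
    [Algebra (TruncatedWittVector p 2 k) Alift] [Module.Flat (TruncatedWittVector p 2 k) Alift]
    {π : Alift →+* A} (hsurj : Function.Surjective π)
    (hker : RingHom.ker π = Ideal.span {(p : Alift)}) : IsFlatSquareZeroLift π p where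
  surjective := hsurj
  ker_eq := hker
  natCast_mul_self := by
    rw [← map_natCast (algebraMap (TruncatedWittVector p 2 k) Alift), ← map_mul,
      natCast_mul_self_eq_zero, map_zero]
  map_eq_zero_of_natCast_mul_eq_zero d hd := by
    have hsmul (z : Alift) : (p : TruncatedWittVector p 2 k) • z = p * z := by
      rw [Algebra.smul_def, map_natCast]
    obtain ⟨e, rfl⟩ :=
      Module.Flat.exists_eq_smul_of_smul_eq_zero (R := TruncatedWittVector p 2 k) (M := Alift)
        (fun _ ha => exists_eq_natCast_mul_of_natCast_mul_eq_zero ha) ((hsmul d).trans hd)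
    rw [hsmul, ← RingHom.mem_ker, hker]
    exact Ideal.mul_mem_right _ _ (Ideal.mem_span_singleton_self _)

namespace IsFrobeniusLift

variable {p : ℕ} [Fact p.Prime] {k : Type*} [Field k] [CharP k p] {A : Type*} [CommRing A]
  {Alift : Type*} [CommRing Alift] [Algebra (TruncatedWittVector p 2 k) Alift] {π : Alift →+* A}
  {φ : Alift →+* Alift}

theorem map_apply (hφ : IsFrobeniusLift p k A Alift π φ) (x : Alift) : π (φ x) = π x ^ p :=
  hφ.1 x

theorem apply_algebraMap (hφ : IsFrobeniusLift p k A Alift π φ)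
    (c : TruncatedWittVector p 2 k) :
    φ (algebraMap (TruncatedWittVector p 2 k) Alift c) =
      algebraMap (TruncatedWittVector p 2 k) Alift
        (TruncatedWittVector.mk p ![c.coeff 0 ^ p, c.coeff 1 ^ p]) :=
  hφ.2 c

end IsFrobeniusLift

namespace IsTwistedDerivation

variable {p : ℕ} {k : Type*} [Field k] {A : Type*} [CommRing A] [Algebra k A] {D : A → A}
  (hD : IsTwistedDerivation p k A D)
include hD

theorem map_add (x y : A) : D (x + y) = D x + D y :=
  hD.1 x y

theorem map_mul (x y : A) : D (x * y) = x ^ p * D y + y ^ p * D x :=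
  hD.2.1 x y

theorem map_algebraMap (c : k) : D (algebraMap k A c) = 0 :=
  hD.2.2 c

end IsTwistedDerivation

section FrobeniusLift

variable {p : ℕ} [Fact p.Prime] {k : Type*} [Field k] [CharP k p] {A : Type*} [CommRing A]
  [Algebra k A] {Alift : Type*} [CommRing Alift] [Algebra (TruncatedWittVector p 2 k) Alift]
  {π : Alift →+* A}
  (hcomp : ∀ c : k,
    π (algebraMap (TruncatedWittVector p 2 k) Alift (TruncatedWittVector.mk p ![c, 0])) =
      algebraMap k A c)
include hcomp

theorem map_algebraMap_eq_algebraMap_coeff_zero [PerfectRing k p] (hp : π p = 0)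
    (c : TruncatedWittVector p 2 k) :
    π (algebraMap (TruncatedWittVector p 2 k) Alift c) = algebraMap k A (c.coeff 0) := by
  obtain ⟨y, hy⟩ := TruncatedWittVector.exists_eq_mk_add_natCast_mul c
  have hc := congrArg (fun c => π (algebraMap (TruncatedWittVector p 2 k) Alift c)) hy
  simpa only [map_add, map_mul, map_natCast, hp, zero_mul, add_zero, hcomp] using hc

theorem isFrobeniusLift_perturb [PerfectRing k p] (h : IsFlatSquareZeroLift π p)
    {φ : Alift →+* Alift} (hφ : IsFrobeniusLift p k A Alift π φ) {D : A → A}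
    (hD : IsTwistedDerivation p k A D) :
    IsFrobeniusLift p k A Alift π (h.perturb hφ.map_apply D hD.map_add hD.map_mul) := by
  have happ := h.perturb_apply hφ.map_apply D hD.map_add hD.map_mul
  refine ⟨fun x => ?_, fun c => ?_⟩
  · rw [happ, map_add, h.map_mulLift, add_zero, hφ.map_apply]
  · rw [happ, map_algebraMap_eq_algebraMap_coeff_zero hcomp h.map_natCast_eq_zero,
      hD.map_algebraMap, h.mulLift_zero, add_zero, hφ.apply_algebraMap]

theorem isTwistedDerivation_of_forall_eq_add_mulLift (h : IsFlatSquareZeroLift π p)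
    {φ φ' : Alift →+* Alift} (hφ : IsFrobeniusLift p k A Alift π φ)
    (hφ' : IsFrobeniusLift p k A Alift π φ') {D : A → A}
    (hD : ∀ x, φ' x = φ x + h.mulLift (D (π x))) : IsTwistedDerivation p k A D := by
  refine ⟨h.map_add_of_forall_eq_add_mulLift hD,
    h.map_mul_of_forall_eq_add_mulLift hD hφ.map_apply, fun c => h.mulLift_injective ?_⟩
  have hc := hD (algebraMap (TruncatedWittVector p 2 k) Alift (TruncatedWittVector.mk p ![c, 0]))
  rw [hφ'.apply_algebraMap, hφ.apply_algebraMap, hcomp, left_eq_add] at hc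
  rw [hc, h.mulLift_zero]

end FrobeniusLift

/-- Let `k` be a perfect field of characteristic `p`, `A` a commutative `k`-algebra, and
`Alift` a flat `W₂(k)`-lift of `A`.  The set of Frobenius lifts on `Alift`, when nonempty, is a
torsor under `Der_k(A, F_*A)`: if `φ` is one Frobenius lift and `∂` is a twisted
derivation, then `φ + p∂` (i.e. `x ↦ φ(x) + p·d` for any lift `d` of `∂(π x)`) is again a
Frobenius lift, unique with this property; and every Frobenius lift on `Alift` arises this way
from a unique `∂`. -/
theorem stmt18 (p : ℕ) [Fact p.Prime] (k : Type*) [Field k] [CharP k p] [PerfectRing k p]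
    (A : Type*) [CommRing A] [Algebra k A]
    (Alift : Type*) [CommRing Alift] [Algebra (TruncatedWittVector p 2 k) Alift]
    [Module.Flat (TruncatedWittVector p 2 k) Alift]
    (π : Alift →+* A) (hsurj : Function.Surjective π)
    (hker : RingHom.ker π = Ideal.span {(p : Alift)})
    (hcomp : ∀ c : k,
      π (algebraMap (TruncatedWittVector p 2 k) Alift (TruncatedWittVector.mk p ![c, 0])) =
        algebraMap k A c)
    (φ : Alift →+* Alift) (hφ : IsFrobeniusLift p k A Alift π φ) :
    (∀ D : A → A, IsTwistedDerivation p k A D →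
      ∃! φ' : Alift →+* Alift, IsFrobeniusLift p k A Alift π φ' ∧
        ∀ x d : Alift, π d = D (π x) → φ' x = φ x + (p : Alift) * d) ∧
    (∀ φ' : Alift →+* Alift, IsFrobeniusLift p k A Alift π φ' →
      ∃! D : A → A, IsTwistedDerivation p k A D ∧
        ∀ x d : Alift, π d = D (π x) → φ' x = φ x + (p : Alift) * d) := by
  have h : IsFlatSquareZeroLift π p := isFlatSquareZeroLift_of_flat (k := k) hsurj hker
  simp only [h.forall_eq_add_natCast_mul_iff]
  refine ⟨fun D hD => ⟨h.perturb hφ.map_apply D hD.map_add hD.map_mul,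
    ⟨isFrobeniusLift_perturb hcomp h hφ hD, fun _ => rfl⟩, fun ψ hψ => RingHom.ext hψ.2⟩,
    fun φ' hφ' => ?_⟩
  obtain ⟨D, hD⟩ := h.exists_forall_eq_add_mulLift (φ := φ) (φ' := φ') fun x => by
    rw [hφ'.map_apply, hφ.map_apply]
  exact ⟨D, ⟨isTwistedDerivation_of_forall_eq_add_mulLift hcomp h hφ hφ' hD, hD⟩,
    fun D' hD' => h.eq_of_forall_eq_add_mulLift hD'.2 hD⟩
end
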